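/- Consider Prox-SDCA with Option I updates. Assume each φ_i is (1/γ)-smooth with respect to ‖·‖_P (equivalently, each φ_i* is γ-strongly convex with respect to ‖·‖_D), g is 1-strongly convex with respect to ‖·‖_{P'}, φ_i ≥ 0 for all i, (1/n)∑_i φ_i(0) ≤ 1, and ‖X_i‖ ≤ R for all i. Then for any ε_P > 0, if the number of iterations satisfies T ≥ (n + R²/(λγ)) · log((n + R²/(λγ))/ε_P), the expected duality gap satisfies E[P(w^{(T)}) − D(α^{(T)})] ≤ ε_P, where the expectation is over the i.i.d. uniformly random coordinate indices i_1,…,i_T used by the algorithm. -/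

import Mathlib

/-!
Option I maximizes the dual increase over the coordinate `α_i`, so it does at least as well as the
step moving `-α_i` the fraction `s = n / C`, `C = n + R² / (λγ)`, of the way to `∇φ_i(X_iᵀ w)`.
Since `φ_i*` is `γ`-strongly convex and `g*` is `1`-smooth, that step raises `D` by at least `s / n`
times the local gap `φ_i*(-α_i) + φ_i(X_iᵀ w) + (X_iᵀ w)ᵀ α_i`, whose average over `i` is the
duality gap `P(w) - D(α)`. Averaging over the random index gives
`E D(α⁽ᵗ⁺¹⁾) ≥ E D(α⁽ᵗ⁾) + E gap_t / C`; with weak duality this yields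
`E [P* - D(α⁽ᵗ⁾)] ≤ (1 - 1/C)ᵗ`, hence `E gap_T ≤ C (1 - 1/C)^T ≤ ε_P`.
-/

open Matrix Filter Topology Finset
open scoped BigOperators

theorem le_of_forall_le_add_mul {a b c : ℝ} (h : ∀ t : ℝ, 0 < t → t ≤ 1 → a ≤ b + c * t) :
    a ≤ b := by
  have hlim : Tendsto (fun t => b + c * t) (𝓝[>] 0) (𝓝 b) := by
    have : Continuous fun t : ℝ => b + c * t := by fun_prop
    simpa using (this.tendsto 0).mono_left nhdsWithin_le_nhds
  refine ge_of_tendsto hlim ?_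
  filter_upwards [Ioc_mem_nhdsGT (zero_lt_one' ℝ)] with t ht using h t ht.1 ht.2

theorem mul_le_one_sub_pow_of_ascent {ρ p : ℝ} {Dv G : ℕ → ℝ} (hρ₀ : 0 ≤ ρ) (hρ₁ : ρ ≤ 1)
    (hasc : ∀ t, Dv t + ρ * G t ≤ Dv (t + 1)) (hDv : ∀ t, Dv t ≤ p)
    (hG : ∀ t, p - Dv t ≤ G t) (h₀ : p - Dv 0 ≤ 1) (T : ℕ) : ρ * G T ≤ (1 - ρ) ^ T := by
  have hdecay : ∀ t, p - Dv t ≤ (1 - ρ) ^ t := by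
    intro t
    induction t with
    | zero => simpa using h₀
    | succ t ih =>
      have := mul_le_mul_of_nonneg_left (hG t) hρ₀
      calc p - Dv (t + 1) ≤ (1 - ρ) * (p - Dv t) := by linarith [hasc t]
        _ ≤ (1 - ρ) * (1 - ρ) ^ t := mul_le_mul_of_nonneg_left ih (by linarith)
        _ = (1 - ρ) ^ (t + 1) := by ring
  linarith [hasc T, hDv (T + 1), hdecay T]

theorem mul_one_sub_inv_pow_le {C ε : ℝ} {T : ℕ} (hC : 1 ≤ C) (hε : 0 < ε)
    (hT : C * Real.log (C / ε) ≤ T) : C * (1 - C⁻¹) ^ T ≤ ε := by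
  have hC₀ : 0 < C := by linarith
  have hexp : (1 - C⁻¹) ^ T ≤ Real.exp (-(T / C)) := by
    calc (1 - C⁻¹) ^ T ≤ Real.exp (-C⁻¹) ^ T :=
          pow_le_pow_left₀ (sub_nonneg.2 (inv_le_one_of_one_le₀ hC)) (Real.one_sub_le_exp_neg _) T
      _ = Real.exp (-(T / C)) := by rw [← Real.exp_nat_mul]; ring_nf
  have hlog : Real.exp (-(T / C)) ≤ ε / C := by
    rw [← Real.exp_log (by positivity : 0 < ε / C), Real.exp_le_exp,
      show ε / C = (C / ε)⁻¹ by rw [inv_div], Real.log_inv, neg_le_neg_iff, le_div_iff₀ hC₀]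
    linarith
  calc C * (1 - C⁻¹) ^ T ≤ C * (ε / C) := mul_le_mul_of_nonneg_left (hexp.trans hlog) hC₀.le
    _ = ε := by field_simp

theorem EReal.coe_finsetSum {ι : Type*} (s : Finset ι) (f : ι → ℝ) :
    ((∑ i ∈ s, f i : ℝ) : EReal) = ∑ i ∈ s, (f i : EReal) := by
  induction s using Finset.cons_induction with
  | empty => simp
  | cons a s ha ih => rw [sum_cons, sum_cons, EReal.coe_add, ih]

theorem sum_apply_update {n : ℕ} {β E : Type*} [AddCommGroup E] (F : Fin n → β → E)
    (α : Fin n → β) (i : Fin n) (b : β) :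
    ∑ j, F j (Function.update α i b j) = ∑ j, F j (α j) + (F i b - F i (α i)) := by
  rw [← sub_eq_iff_eq_add', ← sum_sub_distrib,
    sum_eq_single i (fun j _ hj => by simp [Function.update_of_ne hj]) (by simp)]
  simp

section DualNorm

variable {m : ℕ} {NP ND : (Fin m → ℝ) → ℝ}

def IsAbsHomogeneous (NP : (Fin m → ℝ) → ℝ) : Prop :=
  ∀ (c : ℝ) x, NP (c • x) = |c| * NP x

theorem IsAbsHomogeneous.apply_neg (hNP : IsAbsHomogeneous NP) (x : Fin m → ℝ) :
    NP (-x) = NP x := by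
  simpa using hNP (-1) x

def IsDualNorm (NP ND : (Fin m → ℝ) → ℝ) : Prop :=
  ∀ z, IsLUB {r : ℝ | ∃ x : Fin m → ℝ, NP x = 1 ∧ r = z ⬝ᵥ x} (ND z)

namespace IsDualNorm

theorem dotProduct_le (hND : IsDualNorm NP ND) (z : Fin m → ℝ) {x : Fin m → ℝ} (hx : NP x = 1) :
    z ⬝ᵥ x ≤ ND z :=
  (hND z).1 ⟨x, hx, rfl⟩

theorem le_of_forall_dotProduct_le (hND : IsDualNorm NP ND) {z : Fin m → ℝ} {c : ℝ}
    (h : ∀ x, NP x = 1 → z ⬝ᵥ x ≤ c) : ND z ≤ c :=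
  (hND z).2 (by rintro _ ⟨x, hx, rfl⟩; exact h x hx)

theorem exists_sub_lt_dotProduct (hND : IsDualNorm NP ND) (z : Fin m → ℝ) {ε : ℝ} (hε : 0 < ε) :
    ∃ x, NP x = 1 ∧ ND z - ε < z ⬝ᵥ x := by
  obtain ⟨_, ⟨x, hx, rfl⟩, hlt, -⟩ := (hND z).exists_between_sub_self hε
  exact ⟨x, hx, hlt⟩

theorem nonneg (hND : IsDualNorm NP ND) (hNP : IsAbsHomogeneous NP)
    (z : Fin m → ℝ) : 0 ≤ ND z := by
  obtain ⟨_, x, hx, rfl⟩ := (hND z).nonempty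
  have h₁ := hND.dotProduct_le z hx
  have h₂ := hND.dotProduct_le z (x := -x) (by rw [hNP.apply_neg, hx])
  rw [dotProduct_neg] at h₂
  linarith

theorem neg (hND : IsDualNorm NP ND) (hNP : IsAbsHomogeneous NP)
    (z : Fin m → ℝ) : ND (-z) = ND z := by
  have key : ∀ y, ND (-y) ≤ ND y := fun y => hND.le_of_forall_dotProduct_le fun x hx => by
    simpa [neg_dotProduct, dotProduct_neg] using
      hND.dotProduct_le y (x := -x) (by rw [hNP.apply_neg, hx])
  exact le_antisymm (key z) (by simpa using key (-z))

theorem smul_le (hND : IsDualNorm NP ND) {c : ℝ} (hc : 0 ≤ c) (z : Fin m → ℝ) :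
    ND (c • z) ≤ c * ND z :=
  hND.le_of_forall_dotProduct_le fun x hx => by
    rw [smul_dotProduct, smul_eq_mul]
    exact mul_le_mul_of_nonneg_left (hND.dotProduct_le z hx) hc

theorem add_le (hND : IsDualNorm NP ND) (z₁ z₂ : Fin m → ℝ) : ND (z₁ + z₂) ≤ ND z₁ + ND z₂ :=
  hND.le_of_forall_dotProduct_le fun x hx => by
    rw [add_dotProduct]
    exact add_le_add (hND.dotProduct_le z₁ hx) (hND.dotProduct_le z₂ hx)

theorem dotProduct_le_mul (hND : IsDualNorm NP ND) (hNP : IsAbsHomogeneous NP)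
    (hNP_nonneg : ∀ x, 0 ≤ NP x) (hNP_eq_zero : ∀ x, NP x = 0 ↔ x = 0) (z x : Fin m → ℝ) :
    z ⬝ᵥ x ≤ ND z * NP x := by
  rcases eq_or_ne x 0 with rfl | hx
  · simp [(hNP_eq_zero 0).2 rfl]
  have hpos : 0 < NP x := (hNP_nonneg x).lt_of_ne' (mt (hNP_eq_zero x).1 hx)
  have hunit : NP ((NP x)⁻¹ • x) = 1 := by
    rw [hNP, abs_of_pos (inv_pos.2 hpos), inv_mul_cancel₀ hpos.ne']
  have h := hND.dotProduct_le z hunit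
  rw [dotProduct_smul, smul_eq_mul, inv_mul_le_iff₀ hpos] at h
  linarith

end IsDualNorm

end DualNorm

section Conjugate

variable {m : ℕ} {f : (Fin m → ℝ) → ℝ}

noncomputable def fenchelConj (f : (Fin m → ℝ) → ℝ) (z : Fin m → ℝ) : EReal :=
  ⨆ x, ((x ⬝ᵥ z - f x : ℝ) : EReal)

theorem le_fenchelConj (x z : Fin m → ℝ) : ((x ⬝ᵥ z - f x : ℝ) : EReal) ≤ fenchelConj f z :=
  le_iSup (fun x => ((x ⬝ᵥ z - f x : ℝ) : EReal)) x

theorem fenchelConj_ne_bot (z : Fin m → ℝ) : fenchelConj f z ≠ ⊥ :=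
  ne_bot_of_le_ne_bot (EReal.coe_ne_bot _) (le_fenchelConj 0 z)

theorem fenchelConj_le_coe_iff {z : Fin m → ℝ} {A : ℝ} :
    fenchelConj f z ≤ A ↔ ∀ x, x ⬝ᵥ z - f x ≤ A := by
  simp only [fenchelConj, iSup_le_iff, EReal.coe_le_coe_iff]

theorem le_toReal_fenchelConj {z : Fin m → ℝ}
    (hz : fenchelConj f z ≠ ⊤) (x : Fin m → ℝ) : x ⬝ᵥ z - f x ≤ (fenchelConj f z).toReal :=
  EReal.coe_le_coe_iff.1 <| (le_fenchelConj x z).trans_eq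
    (EReal.coe_toReal hz (fenchelConj_ne_bot z)).symm

theorem fenchelConj_zero_nonpos (hf : ∀ x, 0 ≤ f x) : fenchelConj f 0 ≤ 0 := by
  exact_mod_cast fenchelConj_le_coe_iff.2 fun x => by simpa using hf x

def IsSmoothWrt (NP : (Fin m → ℝ) → ℝ) (f : (Fin m → ℝ) → ℝ)
    (fgrad : (Fin m → ℝ) → Fin m → ℝ) (C : ℝ) : Prop :=
  ∀ a b, f a ≤ f b + fgrad b ⬝ᵥ (a - b) + C * NP (a - b) ^ 2

variable {NP ND : (Fin m → ℝ) → ℝ} {fgrad : (Fin m → ℝ) → Fin m → ℝ}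

theorem ConvexOn.add_dotProduct_le_of_isSmoothWrt {C : ℝ} (hf : ConvexOn ℝ Set.univ f)
    (hNP : IsAbsHomogeneous NP) (hsm : IsSmoothWrt NP f fgrad C)
    (a b : Fin m → ℝ) : f b + fgrad b ⬝ᵥ (a - b) ≤ f a := by
  refine le_of_forall_le_add_mul (c := C * NP (a - b) ^ 2) fun t ht _ => ?_
  -- `b` is a convex combination of `a` and the reflected point `y`, where `f` is bounded above
  set y := b + t • (b - a)
  have hy : f y ≤ f b - t * (fgrad b ⬝ᵥ (a - b)) + C * NP (a - b) ^ 2 * t ^ 2 := by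
    have h := hsm y b
    rw [show y - b = (-t) • (a - b) by module, dotProduct_smul, hNP, abs_neg,
      abs_of_pos ht, smul_eq_mul] at h
    linarith
  have hb : f b ≤ t / (1 + t) * f a + 1 / (1 + t) * f y := by
    have h := hf.2 (Set.mem_univ a) (Set.mem_univ y)
      (show 0 ≤ t / (1 + t) by positivity) (show 0 ≤ 1 / (1 + t) by positivity)
      (by field_simp; ring)
    rwa [show (t / (1 + t)) • a + (1 / (1 + t)) • y = b by
      ext j; simp only [y, Pi.add_apply, Pi.smul_apply, Pi.sub_apply, smul_eq_mul]
      field_simp; ring, smul_eq_mul, smul_eq_mul] at h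
  have hb' : (1 + t) * f b ≤ t * f a + f y := by
    have := mul_le_mul_of_nonneg_left hb (by positivity : (0 : ℝ) ≤ 1 + t)
    rwa [mul_add, ← mul_assoc, ← mul_assoc, mul_div_cancel₀ _ (by positivity),
      mul_one_div_cancel (by positivity), one_mul] at this
  refine le_of_mul_le_mul_left ?_ ht
  linarith

theorem add_sq_le_of_fenchelConj_le {γ : ℝ} (hNP : IsAbsHomogeneous NP)
    (hND : IsDualNorm NP ND) (hγ : 0 < γ) (hsm : IsSmoothWrt NP f fgrad (1 / (2 * γ)))
    {v : Fin m → ℝ} {A : ℝ} (hA : fenchelConj f v ≤ A) (b : Fin m → ℝ) :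
    b ⬝ᵥ v - f b + γ / 2 * ND (v - fgrad b) ^ 2 ≤ A := by
  set z := v - fgrad b
  have hc : 0 ≤ ND z := hND.nonneg hNP z
  refine le_of_forall_le_add_mul (c := γ * ND z) fun ε hε _ => ?_
  obtain ⟨x, hx, hxz⟩ := hND.exists_sub_lt_dotProduct z hε
  -- test the conjugate at `b + γ ‖z‖_D x`, where `x` nearly attains `‖z‖_D`
  have h₁ := fenchelConj_le_coe_iff.1 hA (b + (γ * ND z) • x)
  have h₂ := hsm (b + (γ * ND z) • x) b
  rw [add_sub_cancel_left, hNP, hx, abs_of_nonneg (by positivity), dotProduct_smul,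
    smul_eq_mul, mul_one, show 1 / (2 * γ) * (γ * ND z) ^ 2 = γ / 2 * ND z ^ 2 by
      field_simp] at h₂
  rw [add_dotProduct, smul_dotProduct, smul_eq_mul] at h₁
  have hzx : x ⬝ᵥ v = z ⬝ᵥ x + fgrad b ⬝ᵥ x := by
    simp only [z, sub_dotProduct, dotProduct_comm x]; ring
  have := mul_le_mul_of_nonneg_left hxz.le (by positivity : 0 ≤ γ * ND z)
  nlinarith

theorem fenchelConj_grad_le {b : Fin m → ℝ} (hsub : ∀ a, f b + fgrad b ⬝ᵥ (a - b) ≤ f a) :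
    fenchelConj f (fgrad b) ≤ ((b ⬝ᵥ fgrad b - f b : ℝ) : EReal) :=
  fenchelConj_le_coe_iff.2 fun x => by
    have := hsub x
    rw [dotProduct_sub, dotProduct_comm (fgrad b) x, dotProduct_comm (fgrad b) b] at this
    linarith

theorem fenchelConj_segment_le {γ : ℝ} (hNP : IsAbsHomogeneous NP)
    (hND : IsDualNorm NP ND) (hγ : 0 < γ) (hsm : IsSmoothWrt NP f fgrad (1 / (2 * γ)))
    {b : Fin m → ℝ} (hsub : ∀ a, f b + fgrad b ⬝ᵥ (a - b) ≤ f a) {v : Fin m → ℝ} {A : ℝ}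
    (hA : fenchelConj f v ≤ A) {t : ℝ} (ht₀ : 0 ≤ t) (ht₁ : t ≤ 1) :
    fenchelConj f ((1 - t) • v + t • fgrad b) ≤
      (((1 - t) * A + t * (b ⬝ᵥ fgrad b - f b)
        - γ / 2 * (t * (1 - t)) * ND (v - fgrad b) ^ 2 : ℝ) : EReal) := by
  refine fenchelConj_le_coe_iff.2 fun x => ?_
  have h₁ := add_sq_le_of_fenchelConj_le hNP hND hγ hsm hA x
  have h₂ := add_sq_le_of_fenchelConj_le hNP hND hγ hsm (fenchelConj_grad_le hsub) x
  have htri : ND (v - fgrad b) ≤ ND (v - fgrad x) + ND (fgrad b - fgrad x) := by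
    have := hND.add_le (v - fgrad x) (-(fgrad b - fgrad x))
    rwa [hND.neg hNP, ← sub_eq_add_neg, sub_sub_sub_cancel_right] at this
  have hZ := hND.nonneg hNP (v - fgrad b)
  have hX := hND.nonneg hNP (v - fgrad x)
  have hY := hND.nonneg hNP (fgrad b - fgrad x)
  have hquad : t * (1 - t) * ND (v - fgrad b) ^ 2
      ≤ (1 - t) * ND (v - fgrad x) ^ 2 + t * ND (fgrad b - fgrad x) ^ 2 := by
    have := mul_le_mul_of_nonneg_left (pow_le_pow_left₀ hZ htri 2)
      (mul_nonneg ht₀ (sub_nonneg.2 ht₁))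
    nlinarith [sq_nonneg ((1 - t) * ND (v - fgrad x) - t * ND (fgrad b - fgrad x))]
  rw [dotProduct_add, dotProduct_smul, dotProduct_smul, smul_eq_mul, smul_eq_mul]
  nlinarith [mul_le_mul_of_nonneg_left hquad hγ.le]

end Conjugate

section ConjVia

variable {m : ℕ} {NP ND g : (Fin m → ℝ) → ℝ} {W : (Fin m → ℝ) → Fin m → ℝ}

def conjVia (g : (Fin m → ℝ) → ℝ) (W : (Fin m → ℝ) → Fin m → ℝ) (v : Fin m → ℝ) : ℝ :=
  W v ⬝ᵥ v - g (W v)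

def IsStronglyConvexWrt (NP g : (Fin m → ℝ) → ℝ) : Prop :=
  ∀ (w₁ w₂ : Fin m → ℝ) (t : ℝ), 0 ≤ t → t ≤ 1 →
    g (t • w₁ + (1 - t) • w₂) ≤ t * g w₁ + (1 - t) * g w₂ - t * (1 - t) / 2 * NP (w₁ - w₂) ^ 2

theorem add_sq_le_conjVia (hg : IsStronglyConvexWrt NP g)
    (hW : ∀ v w, w ⬝ᵥ v - g w ≤ conjVia g W v) (v w : Fin m → ℝ) :
    w ⬝ᵥ v - g w + 1 / 2 * NP (w - W v) ^ 2 ≤ conjVia g W v := by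
  refine le_of_forall_le_add_mul (c := 1 / 2 * NP (w - W v) ^ 2) fun t ht ht₁ => ?_
  have h₁ := hW v (t • w + (1 - t) • W v)
  have h₂ := hg w (W v) t ht.le ht₁
  rw [add_dotProduct, smul_dotProduct, smul_dotProduct, smul_eq_mul, smul_eq_mul] at h₁
  unfold conjVia at h₁ ⊢
  refine le_of_mul_le_mul_left ?_ ht
  nlinarith

theorem conjVia_add_le (hg : IsStronglyConvexWrt NP g) (hW : ∀ v w, w ⬝ᵥ v - g w ≤ conjVia g W v)
    (hND : IsDualNorm NP ND) (hNP : IsAbsHomogeneous NP)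
    (hNP_nonneg : ∀ x, 0 ≤ NP x) (hNP_eq_zero : ∀ x, NP x = 0 ↔ x = 0) (v δ : Fin m → ℝ) :
    conjVia g W (v + δ) ≤ conjVia g W v + W v ⬝ᵥ δ + 1 / 2 * ND δ ^ 2 := by
  have h₁ := add_sq_le_conjVia hg hW v (W (v + δ))
  have h₂ := hND.dotProduct_le_mul hNP hNP_nonneg hNP_eq_zero δ (W (v + δ) - W v)
  rw [dotProduct_sub, dotProduct_comm δ, dotProduct_comm δ] at h₂
  have h₃ : conjVia g W (v + δ) = W (v + δ) ⬝ᵥ v - g (W (v + δ)) + W (v + δ) ⬝ᵥ δ := by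
    rw [conjVia, dotProduct_add]; ring
  nlinarith [sq_nonneg (ND δ - NP (W (v + δ) - W v))]

end ConjVia

section OptionI

variable {k d : ℕ} {NP ND : (Fin k → ℝ) → ℝ} {NP' ND' : (Fin d → ℝ) → ℝ}
  {f : (Fin k → ℝ) → ℝ} {fgrad : (Fin k → ℝ) → Fin k → ℝ}

noncomputable def proxObj (f : (Fin k → ℝ) → ℝ) (M : Matrix (Fin d) (Fin k) ℝ)
    (ND' : (Fin d → ℝ) → ℝ) (q : ℝ) (w : Fin d → ℝ) (a Δ : Fin k → ℝ) : EReal :=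
  -fenchelConj f (-(a + Δ)) - ((w ⬝ᵥ M *ᵥ Δ + q * ND' (M *ᵥ Δ) ^ 2 : ℝ) : EReal)

theorem fenchelConj_ne_top_of_proxObj_le {M : Matrix (Fin d) (Fin k) ℝ} {q : ℝ}
    {w : Fin d → ℝ} {a Δ : Fin k → ℝ} (ha : fenchelConj f (-a) ≠ ⊤)
    (hopt : proxObj f M ND' q w a 0 ≤ proxObj f M ND' q w a Δ) :
    fenchelConj f (-(a + Δ)) ≠ ⊤ := by
  intro htop
  lift fenchelConj f (-a) to ℝ using ⟨ha, fenchelConj_ne_bot _⟩ with A hA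
  rw [proxObj, proxObj, htop, add_zero, ← hA, EReal.neg_top, EReal.bot_sub, ← EReal.coe_neg,
    ← EReal.coe_sub, le_bot_iff] at hopt
  exact EReal.coe_ne_bot _ hopt

theorem mul_le_of_proxObj_le {γ R q s : ℝ} (hNP : IsAbsHomogeneous NP)
    (hND : IsDualNorm NP ND) (hNP' : IsAbsHomogeneous NP')
    (hND' : IsDualNorm NP' ND') (hγ : 0 < γ) (hf : ConvexOn ℝ Set.univ f)
    (hsm : IsSmoothWrt NP f fgrad (1 / (2 * γ))) {M : Matrix (Fin d) (Fin k) ℝ}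
    (hM : ∀ z, ND' (M *ᵥ z) ≤ R * ND z) (hq : 0 ≤ q) (hs₀ : 0 ≤ s) (hs₁ : s ≤ 1)
    (hs : 2 * q * s * R ^ 2 ≤ γ * (1 - s)) {w : Fin d → ℝ} {a Δ : Fin k → ℝ}
    (hopt : ∀ Δ', proxObj f M ND' q w a Δ' ≤ proxObj f M ND' q w a Δ) {A B : ℝ}
    (hA : fenchelConj f (-a) = A) (hB : fenchelConj f (-(a + Δ)) = B) :
    s * (A + f (Mᵀ *ᵥ w) + Mᵀ *ᵥ w ⬝ᵥ a) ≤ A - B - (w ⬝ᵥ M *ᵥ Δ + q * ND' (M *ᵥ Δ) ^ 2) := by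
  set z := Mᵀ *ᵥ w
  set u := fgrad z
  -- compare with the step `Δs` that moves `-a` a fraction `s` of the way to `∇f(z)`
  set Δs := s • (-u - a)
  have hconj := fenchelConj_segment_le hNP hND hγ hsm
    (fun x => hf.add_dotProduct_le_of_isSmoothWrt hNP hsm x z) hA.le hs₀ hs₁
  have hcomb : -(a + Δs) = (1 - s) • (-a) + s • u := by module
  have hlin : w ⬝ᵥ M *ᵥ Δs = s * (-(z ⬝ᵥ u) - z ⬝ᵥ a) := by
    rw [dotProduct_mulVec, ← mulVec_transpose, dotProduct_smul, dotProduct_sub, dotProduct_neg,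
      smul_eq_mul]
  have hnorm : ND' (M *ᵥ Δs) ≤ s * (R * ND (-a - u)) := by
    calc ND' (M *ᵥ Δs) = ND' (s • M *ᵥ (-u - a)) := by rw [mulVec_smul]
      _ ≤ s * ND' (M *ᵥ (-u - a)) := hND'.smul_le hs₀ _
      _ ≤ s * (R * ND (-u - a)) := mul_le_mul_of_nonneg_left (hM _) hs₀
      _ = s * (R * ND (-a - u)) := by rw [sub_eq_add_neg, sub_eq_add_neg, add_comm]
  have hsq := mul_le_mul_of_nonneg_left (pow_le_pow_left₀ (hND'.nonneg hNP' _) hnorm 2) hq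
  have hcoef := mul_le_mul_of_nonneg_right hs
    (by positivity : 0 ≤ s * ND (-a - u) ^ 2 / 2)
  have hopt' := hopt Δs
  rw [proxObj, proxObj, hcomb, hB] at hopt'
  have hreal : -((1 - s) * A + s * (z ⬝ᵥ u - f z) - γ / 2 * (s * (1 - s)) * ND (-a - u) ^ 2)
      - (w ⬝ᵥ M *ᵥ Δs + q * ND' (M *ᵥ Δs) ^ 2)
      ≤ -B - (w ⬝ᵥ M *ᵥ Δ + q * ND' (M *ᵥ Δ) ^ 2) := by
    exact_mod_cast (EReal.sub_le_sub (EReal.neg_le_neg_iff.2 hconj) le_rfl).trans hopt'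
  rw [hlin] at hreal
  nlinarith

end OptionI

section Averaging

variable {n : ℕ}

def extendSeq {t : ℕ} (i₀ : Fin n) (σ : Fin t → Fin n) : ℕ → Fin n :=
  fun s => if h : s < t then σ ⟨s, h⟩ else i₀

theorem extendSeq_snoc_of_lt {t s : ℕ} (i₀ : Fin n) (σ : Fin t → Fin n) (i : Fin n) (hs : s < t) :
    extendSeq i₀ (Fin.snoc σ i : Fin (t + 1) → Fin n) s = extendSeq i₀ σ s := by
  simp [extendSeq, hs, Nat.lt_succ_of_lt hs, Fin.snoc]

theorem extendSeq_snoc_self {t : ℕ} (i₀ : Fin n) (σ : Fin t → Fin n) (i : Fin n) :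
    extendSeq i₀ (Fin.snoc σ i : Fin (t + 1) → Fin n) t = i := by
  simp [extendSeq, Fin.snoc]

theorem expect_fun_fin_succ {t : ℕ} (F : (Fin (t + 1) → Fin n) → ℝ) :
    𝔼 σ, F σ = 𝔼 σ : Fin t → Fin n, 𝔼 i, F (Fin.snoc σ i) := by
  rw [Fintype.expect_equiv (Fin.snocEquiv fun _ => Fin n).symm F (fun q => F (Fin.snoc q.2 q.1))
    (fun σ => by simp), ← univ_product_univ,
    expect_product' univ univ (fun i σ => F (Fin.snoc σ i)), expect_comm]

variable {α : Type*} (i₀ : Fin n) (a : (ℕ → Fin n) → ℕ → α)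

theorem expect_add_expect_le (hadapt : ∀ ω ω' t, (∀ s < t, ω s = ω' s) → a ω t = a ω' t)
    (u : α → ℝ) (h : α → Fin n → ℝ) (t : ℕ)
    (hstep : ∀ ω, u (a ω t) + h (a ω t) (ω t) ≤ u (a ω (t + 1))) :
    𝔼 σ : Fin t → Fin n, (u (a (extendSeq i₀ σ) t) + 𝔼 i, h (a (extendSeq i₀ σ) t) i)
      ≤ 𝔼 σ : Fin (t + 1) → Fin n, u (a (extendSeq i₀ σ) (t + 1)) := by
  rw [expect_fun_fin_succ]
  refine expect_le_expect fun σ _ => ?_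
  rw [← expect_const (univ_nonempty_iff.2 ⟨i₀⟩) (u (a (extendSeq i₀ σ) t)), ← expect_add_distrib]
  refine expect_le_expect fun i _ => ?_
  have hprefix : a (extendSeq i₀ (Fin.snoc σ i)) t = a (extendSeq i₀ σ) t :=
    hadapt _ _ _ fun s hs => extendSeq_snoc_of_lt i₀ σ i hs
  simpa [hprefix, extendSeq_snoc_self] using hstep (extendSeq i₀ (Fin.snoc σ i))

theorem mul_expect_gap_le {ρ p : ℝ} (hρ₀ : 0 ≤ ρ) (hρ₁ : ρ ≤ 1)
    (hadapt : ∀ ω ω' t, (∀ s < t, ω s = ω' s) → a ω t = a ω' t)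
    (dual gap : α → ℝ) (localGap : α → Fin n → ℝ) (hgap : ∀ β, gap β = 𝔼 i, localGap β i)
    (hstep : ∀ ω t, dual (a ω t) + ρ * localGap (a ω t) (ω t) ≤ dual (a ω (t + 1)))
    (hdual : ∀ ω t, dual (a ω t) ≤ p) (hp : ∀ ω t, p - dual (a ω t) ≤ gap (a ω t))
    (h₀ : ∀ ω, p - dual (a ω 0) ≤ 1) (T : ℕ) :
    ρ * 𝔼 σ : Fin T → Fin n, gap (a (extendSeq i₀ σ) T) ≤ (1 - ρ) ^ T := by
  have hne : ∀ t, (univ : Finset (Fin t → Fin n)).Nonempty :=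
    fun t => univ_nonempty_iff.2 ⟨fun _ => i₀⟩
  refine mul_le_one_sub_pow_of_ascent
    (Dv := fun t => 𝔼 σ : Fin t → Fin n, dual (a (extendSeq i₀ σ) t))
    (G := fun t => 𝔼 σ : Fin t → Fin n, gap (a (extendSeq i₀ σ) t)) hρ₀ hρ₁ (fun t => ?_)
    (fun t => expect_le (hne t) fun σ _ => hdual _ t) (fun t => ?_) ?_ T
  · have := expect_add_expect_le i₀ a hadapt dual (fun β i => ρ * localGap β i) t (hstep · t)
    simpa only [← mul_expect, ← hgap, expect_add_distrib] using this
  · rw [← expect_const (hne t) p, ← expect_sub_distrib]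
    exact expect_le_expect fun σ _ => hp _ t
  · rw [← expect_const (hne 0) p, ← expect_sub_distrib]
    exact expect_le (hne 0) fun σ _ => h₀ _

theorem coe_mul_sum_sub_le {T : ℕ} {F Dr : (Fin T → Fin n) → ℝ} {Dx : (Fin T → Fin n) → EReal}
    {ε : ℝ} (hD : ∀ σ, Dx σ = Dr σ) (h : 𝔼 σ, (F σ - Dr σ) ≤ ε) :
    ((1 / (n : ℝ) ^ T : ℝ) : EReal) * ∑ σ, ((F σ : EReal) - Dx σ) ≤ ε := by
  simp_rw [hD, ← EReal.coe_sub]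
  rw [← EReal.coe_finsetSum, ← EReal.coe_mul, EReal.coe_le_coe_iff]
  rwa [Fintype.expect_eq_sum_div_card, Fintype.card_fun, Fintype.card_fin, Fintype.card_fin,
    Nat.cast_pow, div_eq_inv_mul, ← one_div] at h

end Averaging

section ProxSDCA

variable {n d k : ℕ} {φ : Fin n → (Fin k → ℝ) → ℝ} {X : Fin n → Matrix (Fin d) (Fin k) ℝ}
  {lam : ℝ} {g : (Fin d → ℝ) → ℝ} {W : (Fin d → ℝ) → Fin d → ℝ}

noncomputable def dualMap (lam : ℝ) (X : Fin n → Matrix (Fin d) (Fin k) ℝ) (β : Fin n → Fin k → ℝ) :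
    Fin d → ℝ :=
  (1 / (lam * n)) • ∑ i, X i *ᵥ β i

noncomputable def primalObj (φ : Fin n → (Fin k → ℝ) → ℝ) (X : Fin n → Matrix (Fin d) (Fin k) ℝ)
    (lam : ℝ) (g : (Fin d → ℝ) → ℝ) (w : Fin d → ℝ) : ℝ :=
  (1 / n) * ∑ i, φ i ((X i)ᵀ *ᵥ w) + lam * g w

-- `toReal` sends `⊤` to `0`; this is harmless since every conjugate value met by the algorithm
-- is finite.
noncomputable def dualObj (φ : Fin n → (Fin k → ℝ) → ℝ) (X : Fin n → Matrix (Fin d) (Fin k) ℝ)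
    (lam : ℝ) (g : (Fin d → ℝ) → ℝ) (W : (Fin d → ℝ) → Fin d → ℝ) (β : Fin n → Fin k → ℝ) : ℝ :=
  (1 / n) * ∑ i, -(fenchelConj (φ i) (-β i)).toReal - lam * conjVia g W (dualMap lam X β)

noncomputable def localGap (φ : Fin n → (Fin k → ℝ) → ℝ) (X : Fin n → Matrix (Fin d) (Fin k) ℝ)
    (lam : ℝ) (W : (Fin d → ℝ) → Fin d → ℝ) (β : Fin n → Fin k → ℝ) (i : Fin n) : ℝ :=
  (fenchelConj (φ i) (-β i)).toReal + φ i ((X i)ᵀ *ᵥ W (dualMap lam X β))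
    + (X i)ᵀ *ᵥ W (dualMap lam X β) ⬝ᵥ β i

theorem mul_dotProduct_dualMap (hlam : lam ≠ 0) (w : Fin d → ℝ) (β : Fin n → Fin k → ℝ) :
    lam * (w ⬝ᵥ dualMap lam X β) = (1 / n) * ∑ i, (X i)ᵀ *ᵥ w ⬝ᵥ β i := by
  simp only [dualMap, dotProduct_smul, dotProduct_sum, dotProduct_mulVec, ← mulVec_transpose,
    smul_eq_mul, ← mul_assoc, one_div, mul_inv, mul_inv_cancel₀ hlam, one_mul]

theorem dualMap_update (α : Fin n → Fin k → ℝ) (i : Fin n) (Δ : Fin k → ℝ) :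
    dualMap lam X (Function.update α i (α i + Δ))
      = dualMap lam X α + (1 / (lam * n)) • X i *ᵥ Δ := by
  rw [dualMap, dualMap, sum_apply_update (fun j β => X j *ᵥ β), mulVec_add, add_sub_cancel_left,
    smul_add]

theorem dualObj_le_primalObj (hlam : 0 < lam) (hW : ∀ v w, w ⬝ᵥ v - g w ≤ conjVia g W v)
    {β : Fin n → Fin k → ℝ} (hβ : ∀ i, fenchelConj (φ i) (-β i) ≠ ⊤) (w : Fin d → ℝ) :
    dualObj φ X lam g W β ≤ primalObj φ X lam g w := by
  have hloss : ∑ i, -(fenchelConj (φ i) (-β i)).toReal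
      ≤ ∑ i, φ i ((X i)ᵀ *ᵥ w) + ∑ i, (X i)ᵀ *ᵥ w ⬝ᵥ β i := by
    rw [← sum_add_distrib]
    refine sum_le_sum fun i _ => ?_
    have := le_toReal_fenchelConj (hβ i) ((X i)ᵀ *ᵥ w)
    rw [dotProduct_neg] at this
    linarith
  have hreg := mul_le_mul_of_nonneg_left (hW (dualMap lam X β) w) hlam.le
  have hpair := mul_dotProduct_dualMap (X := X) hlam.ne' w β
  have hn : (0 : ℝ) ≤ 1 / n := by positivity
  rw [dualObj, primalObj]
  nlinarith [mul_le_mul_of_nonneg_left hloss hn]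

theorem primalObj_sub_dualObj (hlam : lam ≠ 0) (β : Fin n → Fin k → ℝ) :
    primalObj φ X lam g (W (dualMap lam X β)) - dualObj φ X lam g W β
      = 𝔼 i, localGap φ X lam W β i := by
  rw [Fintype.expect_eq_sum_div_card, Fintype.card_fin, primalObj, dualObj, conjVia, mul_sub,
    mul_dotProduct_dualMap hlam]
  simp only [localGap, sum_add_distrib, sum_neg_distrib]
  ring

theorem dualObj_update_ge {NP' ND' : (Fin d → ℝ) → ℝ} (hlam : 0 < lam)
    (hg : IsStronglyConvexWrt NP' g) (hW : ∀ v w, w ⬝ᵥ v - g w ≤ conjVia g W v)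
    (hND' : IsDualNorm NP' ND') (hNP' : IsAbsHomogeneous NP')
    (hNP'_nonneg : ∀ x, 0 ≤ NP' x) (hNP'_eq_zero : ∀ x, NP' x = 0 ↔ x = 0)
    (α : Fin n → Fin k → ℝ) (i : Fin n) (Δ : Fin k → ℝ) :
    dualObj φ X lam g W α + 1 / n * ((fenchelConj (φ i) (-α i)).toReal
        - (fenchelConj (φ i) (-(α i + Δ))).toReal
        - (W (dualMap lam X α) ⬝ᵥ X i *ᵥ Δ + 1 / (2 * lam * n) * ND' (X i *ᵥ Δ) ^ 2))
      ≤ dualObj φ X lam g W (Function.update α i (α i + Δ)) := by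
  have hn : (0 : ℝ) < n := Nat.cast_pos.2 i.pos
  have hsmooth := conjVia_add_le hg hW hND' hNP' hNP'_nonneg hNP'_eq_zero (dualMap lam X α)
    ((1 / (lam * n)) • X i *ᵥ Δ)
  have hnorm := pow_le_pow_left₀ (hND'.nonneg hNP' _)
    (hND'.smul_le (c := 1 / (lam * n)) (by positivity) (X i *ᵥ Δ)) 2
  have hreg : lam * conjVia g W (dualMap lam X α + (1 / (lam * n)) • X i *ᵥ Δ)
      ≤ lam * conjVia g W (dualMap lam X α) + 1 / n * (W (dualMap lam X α) ⬝ᵥ X i *ᵥ Δ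
        + 1 / (2 * lam * n) * ND' (X i *ᵥ Δ) ^ 2) := by
    rw [dotProduct_smul, smul_eq_mul] at hsmooth
    have e₁ : lam * (1 / (lam * n) * (W (dualMap lam X α) ⬝ᵥ X i *ᵥ Δ))
        = 1 / n * (W (dualMap lam X α) ⬝ᵥ X i *ᵥ Δ) := by field_simp
    have e₂ : lam * (1 / 2 * (1 / (lam * n) * ND' (X i *ᵥ Δ)) ^ 2)
        = 1 / n * (1 / (2 * lam * n) * ND' (X i *ᵥ Δ) ^ 2) := by field_simp
    nlinarith [mul_le_mul_of_nonneg_left hsmooth hlam.le, mul_le_mul_of_nonneg_left hnorm hlam.le]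
  rw [dualObj, dualObj, dualMap_update,
    sum_apply_update (fun j β => -(fenchelConj (φ j) (-β)).toReal)]
  linarith

theorem primalObj_nonneg (hlam : 0 ≤ lam) (hφ : ∀ i a, 0 ≤ φ i a) (hg : ∀ w, 0 ≤ g w)
    (w : Fin d → ℝ) : 0 ≤ primalObj φ X lam g w := by
  have := sum_nonneg fun i (_ : i ∈ univ) => hφ i ((X i)ᵀ *ᵥ w)
  have := hg w
  unfold primalObj
  positivity

theorem primalObj_zero_le (hφ : 1 / n * ∑ i, φ i 0 ≤ 1) (hg : g 0 = 0) :
    primalObj φ X lam g 0 ≤ 1 := by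
  simpa [primalObj, hg] using hφ

theorem dualObj_zero_nonneg (hlam : 0 ≤ lam) (hφ : ∀ i a, 0 ≤ φ i a) (hg : ∀ w, 0 ≤ g w) :
    0 ≤ dualObj φ X lam g W 0 := by
  have hloss : ∀ i, (fenchelConj (φ i) 0).toReal ≤ 0 := fun i =>
    EReal.toReal_nonpos (fenchelConj_zero_nonpos (hφ i))
  have hreg : conjVia g W (dualMap lam X 0) ≤ 0 := by
    simpa [conjVia, dualMap] using hg (W 0)
  have := sum_nonneg fun i (_ : i ∈ univ) => neg_nonneg.2 (hloss i)
  simp only [dualObj, Pi.zero_apply, neg_zero]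
  nlinarith [mul_nonneg (by positivity : (0 : ℝ) ≤ 1 / n) this, mul_nonneg hlam (neg_nonneg.2 hreg)]

theorem coe_dualObj {β : Fin n → Fin k → ℝ} (hβ : ∀ i, fenchelConj (φ i) (-β i) ≠ ⊤) :
    ((1 / n : ℝ) : EReal) * ∑ i, -fenchelConj (φ i) (-β i)
      - ((lam * conjVia g W (dualMap lam X β) : ℝ) : EReal) = dualObj φ X lam g W β := by
  have h : ∀ i, -fenchelConj (φ i) (-β i) = ((-(fenchelConj (φ i) (-β i)).toReal : ℝ) : EReal) :=
    fun i => by rw [EReal.coe_neg, EReal.coe_toReal (hβ i) (fenchelConj_ne_bot _)]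
  rw [sum_congr rfl fun i _ => h i, ← EReal.coe_finsetSum, ← EReal.coe_mul, ← EReal.coe_sub,
    dualObj]

def IsOptionIStep (φ : Fin n → (Fin k → ℝ) → ℝ) (X : Fin n → Matrix (Fin d) (Fin k) ℝ)
    (ND' : (Fin d → ℝ) → ℝ) (lam : ℝ) (W : (Fin d → ℝ) → Fin d → ℝ)
    (α α' : Fin n → Fin k → ℝ) (i : Fin n) : Prop :=
  ∃ Δ, α' = Function.update α i (α i + Δ) ∧ ∀ Δ',
    proxObj (φ i) (X i) ND' (1 / (2 * lam * n)) (W (dualMap lam X α)) (α i) Δ'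
      ≤ proxObj (φ i) (X i) ND' (1 / (2 * lam * n)) (W (dualMap lam X α)) (α i) Δ

namespace IsOptionIStep

variable {ND' : (Fin d → ℝ) → ℝ} {α α' : Fin n → Fin k → ℝ} {i : Fin n}

theorem fenchelConj_ne_top (h : IsOptionIStep φ X ND' lam W α α' i)
    (hα : ∀ j, fenchelConj (φ j) (-α j) ≠ ⊤) (j : Fin n) : fenchelConj (φ j) (-α' j) ≠ ⊤ := by
  obtain ⟨Δ, rfl, hopt⟩ := h
  rcases eq_or_ne j i with rfl | hj
  · rw [Function.update_self]
    exact fenchelConj_ne_top_of_proxObj_le (hα j) (hopt 0)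
  · rw [Function.update_of_ne hj]
    exact hα j

theorem dualObj_add_le {NP ND : (Fin k → ℝ) → ℝ} {NP' : (Fin d → ℝ) → ℝ}
    {φgrad : Fin n → (Fin k → ℝ) → Fin k → ℝ} {γ R : ℝ}
    (h : IsOptionIStep φ X ND' lam W α α' i) (hlam : 0 < lam) (hγ : 0 < γ)
    (hNP : IsAbsHomogeneous NP) (hND : IsDualNorm NP ND)
    (hNP' : IsAbsHomogeneous NP') (hND' : IsDualNorm NP' ND')
    (hNP'_nonneg : ∀ x, 0 ≤ NP' x) (hNP'_eq_zero : ∀ x, NP' x = 0 ↔ x = 0)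
    (hXR : ∀ i z, ND' (X i *ᵥ z) ≤ R * ND z) (hφ : ∀ i, ConvexOn ℝ Set.univ (φ i))
    (hφsmooth : ∀ i, IsSmoothWrt NP (φ i) (φgrad i) (1 / (2 * γ)))
    (hg : IsStronglyConvexWrt NP' g) (hW : ∀ v w, w ⬝ᵥ v - g w ≤ conjVia g W v)
    (hα : fenchelConj (φ i) (-α i) ≠ ⊤) :
    dualObj φ X lam g W α + (n + R ^ 2 / (lam * γ))⁻¹ * localGap φ X lam W α i
      ≤ dualObj φ X lam g W α' := by
  obtain ⟨Δ, rfl, hopt⟩ := h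
  have hn : (1 : ℝ) ≤ n := Nat.one_le_cast.2 i.pos
  have hC : 0 < (n : ℝ) + R ^ 2 / (lam * γ) := by positivity
  -- `s = n / C` is exactly the step fraction for which the quadratic terms cancel
  have hs : 2 * (1 / (2 * lam * n)) * (n / (n + R ^ 2 / (lam * γ))) * R ^ 2
      ≤ γ * (1 - n / (n + R ^ 2 / (lam * γ))) := by
    apply le_of_eq
    field_simp
    ring
  obtain ⟨A, hA⟩ : ∃ A : ℝ, fenchelConj (φ i) (-α i) = A :=
    ⟨_, (EReal.coe_toReal hα (fenchelConj_ne_bot _)).symm⟩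
  obtain ⟨B, hB⟩ : ∃ B : ℝ, fenchelConj (φ i) (-(α i + Δ)) = B :=
    ⟨_, (EReal.coe_toReal (fenchelConj_ne_top_of_proxObj_le hα (hopt 0))
      (fenchelConj_ne_bot _)).symm⟩
  have hstep := mul_le_of_proxObj_le hNP hND hNP' hND' hγ (hφ i) (hφsmooth i) (hXR i)
    (by positivity) (by positivity)
    (div_le_one_of_le₀ (le_add_of_nonneg_right (by positivity)) hC.le) hs hopt hA hB
  have hup := dualObj_update_ge (φ := φ) (X := X) hlam hg hW hND' hNP' hNP'_nonneg hNP'_eq_zero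
    α i Δ
  rw [hA, hB, EReal.toReal_coe, EReal.toReal_coe] at hup
  have hCn : ((n : ℝ) + R ^ 2 / (lam * γ))⁻¹ = 1 / n * (n / (n + R ^ 2 / (lam * γ))) := by
    field_simp
  rw [localGap, hA, EReal.toReal_coe, hCn, mul_assoc]
  nlinarith [mul_le_mul_of_nonneg_left hstep (by positivity : (0 : ℝ) ≤ 1 / n)]

end IsOptionIStep

theorem fenchelConj_ne_top_of_isOptionIStep {ND' : (Fin d → ℝ) → ℝ}
    {αseq : (ℕ → Fin n) → ℕ → Fin n → Fin k → ℝ} (hφ : ∀ i a, 0 ≤ φ i a)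
    (hinit : ∀ ω, αseq ω 0 = 0)
    (hstep : ∀ ω t, IsOptionIStep φ X ND' lam W (αseq ω t) (αseq ω (t + 1)) (ω t))
    (ω : ℕ → Fin n) (t : ℕ) : ∀ i, fenchelConj (φ i) (-αseq ω t i) ≠ ⊤ := by
  induction t with
  | zero =>
    intro i
    rw [hinit, Pi.zero_apply, neg_zero]
    exact ne_top_of_le_ne_top EReal.zero_ne_top (fenchelConj_zero_nonpos (hφ i))
  | succ t ih => exact (hstep ω t).fenchelConj_ne_top ih

end ProxSDCA

theorem prox_sdca_smooth_duality_gap_general (d k n : ℕ) (hn : 0 < n)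
    (lam γ R εP : ℝ) (hlam : 0 < lam) (hγ : 0 < γ) (hεP : 0 < εP)
    -- ‖·‖_P, a norm on ℝ^k, and its dual norm ‖·‖_D:
    (NP : (Fin k → ℝ) → ℝ)
    (hNP_smul : ∀ (c : ℝ) (x : Fin k → ℝ), NP (c • x) = |c| * NP x)
    (ND : (Fin k → ℝ) → ℝ)
    (hND : ∀ z, IsLUB {r : ℝ | ∃ x : Fin k → ℝ, NP x = 1 ∧ r = ∑ j, z j * x j} (ND z))
    -- ‖·‖_{P'}, a norm on ℝ^d, and its dual norm ‖·‖_{D'}: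
    (NP' : (Fin d → ℝ) → ℝ)
    (hNP'_nonneg : ∀ x, 0 ≤ NP' x)
    (hNP'_eq_zero : ∀ x, NP' x = 0 ↔ x = 0)
    (hNP'_smul : ∀ (c : ℝ) (x : Fin d → ℝ), NP' (c • x) = |c| * NP' x)
    (ND' : (Fin d → ℝ) → ℝ)
    (hND' : ∀ z, IsLUB {r : ℝ | ∃ x : Fin d → ℝ, NP' x = 1 ∧ r = ∑ j, z j * x j} (ND' z))
    -- data matrices, with operator norms bounded by R:
    (X : Fin n → Matrix (Fin d) (Fin k) ℝ)
    (hXR : ∀ i (z : Fin k → ℝ), ND' ((X i).mulVec z) ≤ R * ND z)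
    -- the losses: convex, nonnegative, (1/γ)-smooth w.r.t. ‖·‖_P, small at 0:
    (φ : Fin n → (Fin k → ℝ) → ℝ) (hφconv : ∀ i, ConvexOn ℝ Set.univ (φ i))
    (φgrad : Fin n → (Fin k → ℝ) → (Fin k → ℝ))
    (hφsmooth : ∀ i a b, φ i a ≤ φ i b + (∑ j, φgrad i b j * (a j - b j))
        + (1 / (2 * γ)) * NP (a - b) ^ 2)
    (hφnonneg : ∀ i a, 0 ≤ φ i a)
    (hφzero : (1 / n) * ∑ i, φ i 0 ≤ 1)
    -- the regularizer: convex, 1-strongly convex w.r.t. ‖·‖_{P'}, normalized: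
    (g : (Fin d → ℝ) → ℝ)
    (hgsc : ∀ (w₁ w₂ : Fin d → ℝ) (t : ℝ), 0 ≤ t → t ≤ 1 →
      g (t • w₁ + (1 - t) • w₂) ≤ t * g w₁ + (1 - t) * g w₂
        - (t * (1 - t) / 2) * NP' (w₁ - w₂) ^ 2)
    (hgzero : g 0 = 0) (hgnonneg : ∀ w, 0 ≤ g w)
    -- conjugates of the losses:
    (fconj : Fin n → (Fin k → ℝ) → EReal)
    (hfconj : ∀ i z, fconj i z = ⨆ x : Fin k → ℝ, ((∑ j, x j * z j - φ i x : ℝ) : EReal))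
    -- `Ggrad v = ∇g*(v)`, the maximizer of `w ↦ wᵀv − g(w)` (so that
    -- `g*(v) = Ggrad v ᵀ v − g (Ggrad v)`):
    (Ggrad : (Fin d → ℝ) → (Fin d → ℝ))
    (hGgrad : ∀ (v w' : Fin d → ℝ),
      (∑ j, w' j * v j) - g w' ≤ (∑ j, Ggrad v j * v j) - g (Ggrad v))
    -- primal and dual objectives:
    (vmap : (Fin n → Fin k → ℝ) → (Fin d → ℝ))
    (hvmap : ∀ β, vmap β = (1 / (lam * n)) • ∑ i, (X i).mulVec (β i))
    (P : (Fin d → ℝ) → ℝ)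
    (hP : ∀ w, P w = (1 / n) * ∑ i, φ i ((X i).transpose.mulVec w) + lam * g w)
    (D : (Fin n → Fin k → ℝ) → EReal)
    (hD : ∀ β, D β = ((1 / n : ℝ) : EReal) * (∑ i, -(fconj i (-(β i))))
        - ((lam * ((∑ j, Ggrad (vmap β) j * vmap β j) - g (Ggrad (vmap β))) : ℝ) : EReal))
    -- the Prox-SDCA trajectory: `αseq ω t` is the dual iterate after `t` steps
    -- when the random coordinate indices are `ω 0, ω 1, …`:
    (αseq : (ℕ → Fin n) → ℕ → (Fin n → Fin k → ℝ))
    (hinit : ∀ ω, αseq ω 0 = 0)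
    (hadapt : ∀ ω ω' t, (∀ s < t, ω s = ω' s) → αseq ω t = αseq ω' t)
    -- Option I: the increment of column `ω t` maximizes the proximal dual objective:
    (obj : (ℕ → Fin n) → ℕ → (Fin k → ℝ) → EReal)
    (hobj : ∀ ω t Δ, obj ω t Δ = -(fconj (ω t) (-(αseq ω t (ω t) + Δ)))
        - (((∑ j, Ggrad (vmap (αseq ω t)) j * (X (ω t)).mulVec Δ j)
          + (1 / (2 * lam * n)) * ND' ((X (ω t)).mulVec Δ) ^ 2 : ℝ) : EReal))
    (hupdate : ∀ ω t, ∃ Δ : Fin k → ℝ,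
      αseq ω (t + 1) = Function.update (αseq ω t) (ω t) (αseq ω t (ω t) + Δ) ∧
      ∀ Δ' : Fin k → ℝ, obj ω t Δ' ≤ obj ω t Δ) :
    -- conclusion: after T iterations the expected duality gap is at most ε_P
    ∀ T : ℕ,
      ((n : ℝ) + R ^ 2 / (lam * γ)) * Real.log (((n : ℝ) + R ^ 2 / (lam * γ)) / εP)
        ≤ (T : ℝ) →
      ((1 / (n : ℝ) ^ T : ℝ) : EReal) * ∑ σ : Fin T → Fin n,
          (((P (Ggrad (vmap (αseq (fun t => if h : t < T then σ ⟨t, h⟩ else ⟨0, hn⟩) T))) : ℝ) : EReal)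
            - D (αseq (fun t => if h : t < T then σ ⟨t, h⟩ else ⟨0, hn⟩) T))
        ≤ ((εP : ℝ) : EReal) := by
  intro T hT
  obtain rfl : fconj = fun i => fenchelConj (φ i) := funext₂ hfconj
  obtain rfl : vmap = dualMap lam X := funext hvmap
  obtain rfl : P = primalObj φ X lam g := funext hP
  obtain rfl : obj = fun ω t => proxObj (φ (ω t)) (X (ω t)) ND' (1 / (2 * lam * n))
      (Ggrad (dualMap lam X (αseq ω t))) (αseq ω t (ω t)) := funext₃ hobj
  have hstep : ∀ ω t, IsOptionIStep φ X ND' lam Ggrad (αseq ω t) (αseq ω (t + 1)) (ω t) := hupdate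
  have hfin := fenchelConj_ne_top_of_isOptionIStep hφnonneg hinit hstep
  set C := (n : ℝ) + R ^ 2 / (lam * γ)
  have hC : 1 ≤ C := le_add_of_le_of_nonneg (Nat.one_le_cast.2 hn) (by positivity)
  have hbdd : BddBelow (Set.range (primalObj φ X lam g)) :=
    ⟨0, Set.forall_mem_range.2 (primalObj_nonneg hlam.le hφnonneg hgnonneg)⟩
  have hgap := mul_expect_gap_le ⟨0, hn⟩ αseq (inv_nonneg.2 (by linarith))
    (inv_le_one_of_one_le₀ hC) hadapt (dualObj φ X lam g Ggrad) _ (localGap φ X lam Ggrad)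
    (primalObj_sub_dualObj hlam.ne')
    (fun ω t => (hstep ω t).dualObj_add_le hlam hγ hNP_smul hND hNP'_smul hND' hNP'_nonneg
      hNP'_eq_zero hXR hφconv hφsmooth hgsc hGgrad (hfin ω t _))
    (fun ω t => le_ciInf (dualObj_le_primalObj hlam hGgrad (hfin ω t)))
    (fun ω t => sub_le_sub_right (ciInf_le hbdd _) _)
    (fun ω => by
      rw [hinit]
      linarith [ciInf_le hbdd 0, primalObj_zero_le (X := X) (lam := lam) hφzero hgzero,
        dualObj_zero_nonneg (X := X) (W := Ggrad) hlam.le hφnonneg hgnonneg]) T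
  refine coe_mul_sum_sub_le (fun σ => (hD _).trans (coe_dualObj (hfin _ T))) ?_
  exact ((inv_mul_le_iff₀ (by linarith)).1 hgap).trans (mul_one_sub_inv_pow_le hC hεP hT)

/-- Theorem 1, first part: for (1/γ)-smooth losses, Prox-SDCA with
Option I updates reaches expected duality gap `E[P(w^(T)) − D(α^(T))] ≤ ε_P` after
`T ≥ (n + R²/(λγ)) log((n + R²/(λγ))/ε_P)` iterations.  The expectation is the
average over all sequences of the i.i.d. uniform coordinate indices. -/
theorem prox_sdca_smooth_duality_gap (d k n : ℕ) (hn : 0 < n)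
    (lam γ R εP : ℝ) (hlam : 0 < lam) (hγ : 0 < γ) (hR : 0 ≤ R) (hεP : 0 < εP)
    -- ‖·‖_P, a norm on ℝ^k, and its dual norm ‖·‖_D:
    (NP : (Fin k → ℝ) → ℝ)
    (hNP_nonneg : ∀ x, 0 ≤ NP x)
    (hNP_eq_zero : ∀ x, NP x = 0 ↔ x = 0)
    (hNP_add : ∀ x y, NP (x + y) ≤ NP x + NP y)
    (hNP_smul : ∀ (c : ℝ) (x : Fin k → ℝ), NP (c • x) = |c| * NP x)
    (ND : (Fin k → ℝ) → ℝ)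
    (hND : ∀ z, IsLUB {r : ℝ | ∃ x : Fin k → ℝ, NP x = 1 ∧ r = ∑ j, z j * x j} (ND z))
    -- ‖·‖_{P'}, a norm on ℝ^d, and its dual norm ‖·‖_{D'}:
    (NP' : (Fin d → ℝ) → ℝ)
    (hNP'_nonneg : ∀ x, 0 ≤ NP' x)
    (hNP'_eq_zero : ∀ x, NP' x = 0 ↔ x = 0)
    (hNP'_add : ∀ x y, NP' (x + y) ≤ NP' x + NP' y)
    (hNP'_smul : ∀ (c : ℝ) (x : Fin d → ℝ), NP' (c • x) = |c| * NP' x)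
    (ND' : (Fin d → ℝ) → ℝ)
    (hND' : ∀ z, IsLUB {r : ℝ | ∃ x : Fin d → ℝ, NP' x = 1 ∧ r = ∑ j, z j * x j} (ND' z))
    -- data matrices, with operator norms bounded by R:
    (X : Fin n → Matrix (Fin d) (Fin k) ℝ)
    (hXR : ∀ i (z : Fin k → ℝ), ND' ((X i).mulVec z) ≤ R * ND z)
    -- the losses: convex, nonnegative, (1/γ)-smooth w.r.t. ‖·‖_P, small at 0:
    (φ : Fin n → (Fin k → ℝ) → ℝ) (hφconv : ∀ i, ConvexOn ℝ Set.univ (φ i))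
    (φgrad : Fin n → (Fin k → ℝ) → (Fin k → ℝ))
    (hφsmooth : ∀ i a b, φ i a ≤ φ i b + (∑ j, φgrad i b j * (a j - b j))
        + (1 / (2 * γ)) * NP (a - b) ^ 2)
    (hφnonneg : ∀ i a, 0 ≤ φ i a)
    (hφzero : (1 / n) * ∑ i, φ i 0 ≤ 1)
    -- the regularizer: convex, 1-strongly convex w.r.t. ‖·‖_{P'}, normalized:
    (g : (Fin d → ℝ) → ℝ) (hgconv : ConvexOn ℝ Set.univ g)
    (hgsc : ∀ (w₁ w₂ : Fin d → ℝ) (t : ℝ), 0 ≤ t → t ≤ 1 →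
      g (t • w₁ + (1 - t) • w₂) ≤ t * g w₁ + (1 - t) * g w₂
        - (t * (1 - t) / 2) * NP' (w₁ - w₂) ^ 2)
    (hgzero : g 0 = 0) (hgnonneg : ∀ w, 0 ≤ g w)
    -- conjugates of the losses:
    (fconj : Fin n → (Fin k → ℝ) → EReal)
    (hfconj : ∀ i z, fconj i z = ⨆ x : Fin k → ℝ, ((∑ j, x j * z j - φ i x : ℝ) : EReal))
    -- `Ggrad v = ∇g*(v)`, the maximizer of `w ↦ wᵀv − g(w)` (so that
    -- `g*(v) = Ggrad v ᵀ v − g (Ggrad v)`):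
    (Ggrad : (Fin d → ℝ) → (Fin d → ℝ))
    (hGgrad : ∀ (v w' : Fin d → ℝ),
      (∑ j, w' j * v j) - g w' ≤ (∑ j, Ggrad v j * v j) - g (Ggrad v))
    -- primal and dual objectives:
    (vmap : (Fin n → Fin k → ℝ) → (Fin d → ℝ))
    (hvmap : ∀ β, vmap β = (1 / (lam * n)) • ∑ i, (X i).mulVec (β i))
    (P : (Fin d → ℝ) → ℝ)
    (hP : ∀ w, P w = (1 / n) * ∑ i, φ i ((X i).transpose.mulVec w) + lam * g w)
    (D : (Fin n → Fin k → ℝ) → EReal)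
    (hD : ∀ β, D β = ((1 / n : ℝ) : EReal) * (∑ i, -(fconj i (-(β i))))
        - ((lam * ((∑ j, Ggrad (vmap β) j * vmap β j) - g (Ggrad (vmap β))) : ℝ) : EReal))
    -- the Prox-SDCA trajectory: `αseq ω t` is the dual iterate after `t` steps
    -- when the random coordinate indices are `ω 0, ω 1, …`:
    (αseq : (ℕ → Fin n) → ℕ → (Fin n → Fin k → ℝ))
    (hinit : ∀ ω, αseq ω 0 = 0)
    (hadapt : ∀ ω ω' t, (∀ s < t, ω s = ω' s) → αseq ω t = αseq ω' t)
    -- Option I: the increment of column `ω t` maximizes the proximal dual objective: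
    (obj : (ℕ → Fin n) → ℕ → (Fin k → ℝ) → EReal)
    (hobj : ∀ ω t Δ, obj ω t Δ = -(fconj (ω t) (-(αseq ω t (ω t) + Δ)))
        - (((∑ j, Ggrad (vmap (αseq ω t)) j * (X (ω t)).mulVec Δ j)
          + (1 / (2 * lam * n)) * ND' ((X (ω t)).mulVec Δ) ^ 2 : ℝ) : EReal))
    (hupdate : ∀ ω t, ∃ Δ : Fin k → ℝ,
      αseq ω (t + 1) = Function.update (αseq ω t) (ω t) (αseq ω t (ω t) + Δ) ∧
      ∀ Δ' : Fin k → ℝ, obj ω t Δ' ≤ obj ω t Δ) :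
    -- conclusion: after T iterations the expected duality gap is at most ε_P
    ∀ T : ℕ,
      ((n : ℝ) + R ^ 2 / (lam * γ)) * Real.log (((n : ℝ) + R ^ 2 / (lam * γ)) / εP)
        ≤ (T : ℝ) →
      ((1 / (n : ℝ) ^ T : ℝ) : EReal) * ∑ σ : Fin T → Fin n,
          (((P (Ggrad (vmap (αseq (fun t => if h : t < T then σ ⟨t, h⟩ else ⟨0, hn⟩) T))) : ℝ) : EReal)
            - D (αseq (fun t => if h : t < T then σ ⟨t, h⟩ else ⟨0, hn⟩) T))
        ≤ ((εP : ℝ) : EReal) :=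
  prox_sdca_smooth_duality_gap_general d k n hn lam γ R εP hlam hγ hεP NP hNP_smul ND hND NP'
    hNP'_nonneg hNP'_eq_zero hNP'_smul ND' hND' X hXR φ hφconv φgrad hφsmooth hφnonneg hφzero g hgsc
    hgzero hgnonneg fconj hfconj Ggrad hGgrad vmap hvmap P hP D hD αseq hinit hadapt obj hobj
    hupdate
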